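/- (Identity for the truncated V-fractional Taylor remainder.) Let 0 < a ≤ b, let n ≥ −1 be an integer, and let f : (0,∞) → ℝ be (n+1) times α-differentiable with D_α^{n+1} f continuous on (0,∞). Then for every t ∈ [a,b]: ∫_a^b (D_α^{n+1} f(s)/(n+1)!)·((t^α − s^α)/(λα))^{n+1} dωs = ∫_a^t R_{n,f}(a,s) dωs + ∫_t^b R_{n,f}(b,s) dωs. -/

import Mathlib

open Real Set MeasureTheory Filter

noncomputable def poch (x y : ℝ) : ℝ := Real.Gamma (x + y) / Real.Gamma x

noncomputable def vlam (γ β ρ δ p q : ℝ) : ℝ :=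
  (Real.Gamma β * poch ρ q) / (Real.Gamma (γ + β) * poch δ p)

/-- Truncated V-fractional derivative `D_α f t = λ t^(1-α) f' t`. -/
noncomputable def Dal (γ β ρ δ p q α : ℝ) (f : ℝ → ℝ) : ℝ → ℝ :=
  fun t => vlam γ β ρ δ p q * t ^ (1 - α) * deriv f t

/-- `f` is `k` times α-differentiable. -/
def alphaDiff (γ β ρ δ p q α : ℝ) (k : ℕ) (f : ℝ → ℝ) : Prop :=
  ∀ j < k, DifferentiableOn ℝ ((Dal γ β ρ δ p q α)^[j] f) (Set.Ioi 0)

/-- V-fractional integral `∫_a^b f dω = λ⁻¹ ∫_a^b f x · x^(α-1) dx`. -/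
noncomputable def VInt (γ β ρ δ p q α : ℝ) (a b : ℝ) (f : ℝ → ℝ) : ℝ :=
  (vlam γ β ρ δ p q)⁻¹ * ∫ x in a..b, f x * x ^ (α - 1)

/-- Truncated V-fractional Taylor remainder with `m` terms; `R_{n,f} = Rtay (n+1)`. -/
noncomputable def Rtay (γ β ρ δ p q α : ℝ) (m : ℕ) (f : ℝ → ℝ) (t s : ℝ) : ℝ :=
  f s - ∑ k ∈ Finset.range m,
    ((Dal γ β ρ δ p q α)^[k] f t / (Nat.factorial k : ℝ)) *
      ((s ^ α - t ^ α) / (vlam γ β ρ δ p q * α)) ^ k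

/-! With `dω s = λ⁻¹ s^(α-1) ds` the chain rule reads `g' s = D_α g s · s^(α-1) / λ`, so the
V-fractional integral of `D_α g` is `g b - g a` and integration by parts works as usual.
Induct on the order: integrating the kernel `D^(m+1) f s · ((t^α - s^α)/(λα))^(m+1)/(m+1)!` by parts
lowers its order by one and produces two boundary terms at `a` and `b`; these are exactly the
integrals over `[a, t]` and `[t, b]` of the Taylor terms by which consecutive remainders differ. For
`m = 0` the identity is additivity of the integral over `[a, t] ∪ [t, b]`. -/

open scoped Nat

lemma vlam_pos {γ β ρ δ p q : ℝ} (hγ : 0 < γ) (hβ : 0 < β) (hρ : 0 < ρ) (hδ : 0 < δ)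
    (hp : 0 < p) (hq : 0 < q) : 0 < vlam γ β ρ δ p q := by
  have poch_pos {x y : ℝ} (hx : 0 < x) (hy : 0 < y) : 0 < poch x y :=
    div_pos (Gamma_pos_of_pos (add_pos hx hy)) (Gamma_pos_of_pos hx)
  exact div_pos (mul_pos (Gamma_pos_of_pos hβ) (poch_pos hρ hq))
    (mul_pos (Gamma_pos_of_pos (add_pos hγ hβ)) (poch_pos hδ hp))

lemma uIcc_subset_Ioi_zero {u v : ℝ} (hu : 0 < u) (hv : 0 < v) : uIcc u v ⊆ Ioi 0 :=
  fun _ hx => (lt_min hu hv).trans_le hx.1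

lemma continuousOn_rpow_const_Ioi (r : ℝ) : ContinuousOn (fun x : ℝ => x ^ r) (Ioi 0) :=
  fun x hx => (continuousAt_rpow_const x r (Or.inl hx.ne')).continuousWithinAt

lemma continuousOn_rpow_sub_div_pow (α c L : ℝ) (k : ℕ) :
    ContinuousOn (fun s : ℝ => ((s ^ α - c) / L) ^ k) (Ioi 0) :=
  (((continuousOn_rpow_const_Ioi α).sub continuousOn_const).div_const L).pow k

lemma continuousOn_sub_rpow_div_pow (α c L : ℝ) (k : ℕ) :
    ContinuousOn (fun s : ℝ => ((c - s ^ α) / L) ^ k) (Ioi 0) :=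
  ((continuousOn_const.sub (continuousOn_rpow_const_Ioi α)).div_const L).pow k

lemma intervalIntegrable_mul_rpow {g : ℝ → ℝ} {u v : ℝ} (hu : 0 < u) (hv : 0 < v)
    (hg : ContinuousOn g (Ioi 0)) (r : ℝ) :
    IntervalIntegrable (fun x => g x * x ^ r) volume u v :=
  ((hg.mul (continuousOn_rpow_const_Ioi r)).mono (uIcc_subset_Ioi_zero hu hv)).intervalIntegrable

lemma HasDerivAt.pow_succ_div_factorial {g : ℝ → ℝ} {g' x : ℝ} (h : HasDerivAt g g' x)
    (k : ℕ) : HasDerivAt (fun y => g y ^ (k + 1) / (k + 1)!) (g x ^ k / k ! * g') x := by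
  refine ((h.pow (k + 1)).div_const ((k + 1)! : ℝ)).congr_deriv ?_
  rw [Nat.factorial_succ]
  push_cast
  field_simp

lemma hasDerivAt_rpow_sub_div {α : ℝ} (hα : α ≠ 0) (c L : ℝ) {s : ℝ} (hs : 0 < s) :
    HasDerivAt (fun x : ℝ => (x ^ α - c) / (L * α)) (s ^ (α - 1) / L) s := by
  refine (((hasDerivAt_rpow_const (p := α) (Or.inl hs.ne')).sub_const c).div_const
    (L * α)).congr_deriv ?_
  field_simp

lemma hasDerivAt_sub_rpow_div {α : ℝ} (hα : α ≠ 0) (c L : ℝ) {s : ℝ} (hs : 0 < s) :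
    HasDerivAt (fun x : ℝ => (c - x ^ α) / (L * α)) (-(s ^ (α - 1) / L)) s := by
  refine (((hasDerivAt_rpow_const (p := α) (Or.inl hs.ne')).const_sub c).div_const
    (L * α)).congr_deriv ?_
  field_simp

section VFractional

variable {γ β ρ δ p q α : ℝ}

local notation "Λ" => vlam γ β ρ δ p q
local notation "𝒟" => Dal γ β ρ δ p q α
local notation "∫ω" => VInt γ β ρ δ p q α

lemma DifferentiableAt.hasDerivAt_Dal {g : ℝ → ℝ} {s : ℝ} (hg : DifferentiableAt ℝ g s)
    (hL : Λ ≠ 0) (hs : 0 < s) : HasDerivAt g (𝒟 g s * s ^ (α - 1) / Λ) s := by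
  refine hg.hasDerivAt.congr_deriv ?_
  have : s ^ (1 - α) * s ^ (α - 1) = 1 := by rw [← rpow_add hs]; simp
  simp only [Dal]
  field_simp
  linear_combination -deriv g s * this

lemma VInt_const_mul (A u v : ℝ) (g : ℝ → ℝ) :
    ∫ω u v (fun s => A * g s) = A * ∫ω u v g := by
  simp only [VInt, mul_assoc, intervalIntegral.integral_const_mul]
  ring

lemma VInt_sub {u v : ℝ} (hu : 0 < u) (hv : 0 < v) {g h : ℝ → ℝ}
    (hg : ContinuousOn g (Ioi 0)) (hh : ContinuousOn h (Ioi 0)) :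
    ∫ω u v (fun s => g s - h s) = ∫ω u v g - ∫ω u v h := by
  simp only [VInt, sub_mul]
  rw [intervalIntegral.integral_sub (intervalIntegrable_mul_rpow hu hv hg _)
    (intervalIntegrable_mul_rpow hu hv hh _), mul_sub]

lemma VInt_add_adjacent {u v w : ℝ} (hu : 0 < u) (hv : 0 < v) (hw : 0 < w) {g : ℝ → ℝ}
    (hg : ContinuousOn g (Ioi 0)) : ∫ω u v g + ∫ω v w g = ∫ω u w g := by
  simp only [VInt]
  rw [← mul_add, intervalIntegral.integral_add_adjacent_intervals
    (intervalIntegrable_mul_rpow hu hv hg _) (intervalIntegrable_mul_rpow hv hw hg _)]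

lemma VInt_eq_sub_of_hasDerivAt {u v : ℝ} (hu : 0 < u) (hv : 0 < v) {F g : ℝ → ℝ}
    (hg : ContinuousOn g (Ioi 0)) (hF : ∀ s ∈ uIcc u v, HasDerivAt F (g s * s ^ (α - 1) / Λ) s) :
    ∫ω u v g = F v - F u := by
  rw [VInt, ← intervalIntegral.integral_eq_sub_of_hasDerivAt hF
    ((intervalIntegrable_mul_rpow hu hv hg _).div_const _), intervalIntegral.integral_div,
    inv_mul_eq_div]

lemma VInt_rpow_sub_div_pow (hα : α ≠ 0) {u v : ℝ} (hu : 0 < u) (hv : 0 < v) (c : ℝ) (k : ℕ) :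
    ∫ω u v (fun s => ((s ^ α - c) / (Λ * α)) ^ k / k !) =
      ((v ^ α - c) / (Λ * α)) ^ (k + 1) / (k + 1)! -
        ((u ^ α - c) / (Λ * α)) ^ (k + 1) / (k + 1)! :=
  VInt_eq_sub_of_hasDerivAt hu hv ((continuousOn_rpow_sub_div_pow α c _ k).div_const _)
    fun s hs => by
      simpa [mul_div_assoc] using
        (hasDerivAt_rpow_sub_div hα c Λ (uIcc_subset_Ioi_zero hu hv hs)).pow_succ_div_factorial k

lemma VInt_taylor_kernel_succ (hα : α ≠ 0) (hL : Λ ≠ 0) {a b : ℝ} (ha : 0 < a) (hb : 0 < b)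
    (t : ℝ) (k : ℕ) {g : ℝ → ℝ} (hg : DifferentiableOn ℝ g (Ioi 0))
    (hDg : ContinuousOn (𝒟 g) (Ioi 0)) :
    ∫ω a b (fun s => 𝒟 g s / (k + 1)! * ((t ^ α - s ^ α) / (Λ * α)) ^ (k + 1)) =
      ∫ω a b (fun s => g s / k ! * ((t ^ α - s ^ α) / (Λ * α)) ^ k) +
        (g b * ((t ^ α - b ^ α) / (Λ * α)) ^ (k + 1) / (k + 1)! -
          g a * ((t ^ α - a ^ α) / (Λ * α)) ^ (k + 1) / (k + 1)!) := by
  have hψ := continuousOn_sub_rpow_div_pow α (t ^ α) (Λ * α)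
  have h₁ : ContinuousOn (fun s => 𝒟 g s / (k + 1)! * ((t ^ α - s ^ α) / (Λ * α)) ^ (k + 1))
      (Ioi 0) := (hDg.div_const _).mul (hψ _)
  have h₀ : ContinuousOn (fun s => g s / k ! * ((t ^ α - s ^ α) / (Λ * α)) ^ k) (Ioi 0) :=
    (hg.continuousOn.div_const _).mul (hψ _)
  rw [← sub_eq_iff_eq_add', ← VInt_sub ha hb h₁ h₀]
  refine VInt_eq_sub_of_hasDerivAt (F := fun x => g x * ((t ^ α - x ^ α) / (Λ * α)) ^ (k + 1) /
    (k + 1)!) ha hb ?_ fun s hs => ?_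
  · exact h₁.sub h₀
  have hs0 := uIcc_subset_Ioi_zero ha hb hs
  have hF := ((hg.differentiableAt (Ioi_mem_nhds hs0)).hasDerivAt_Dal (α := α) hL hs0).mul
      ((hasDerivAt_sub_rpow_div hα (t ^ α) Λ hs0).pow_succ_div_factorial k)
  refine (hF.congr_of_eventuallyEq (.of_forall fun x => ?_)).congr_deriv ?_
  · simp only [Pi.mul_apply, mul_div_assoc]
  · rw [Nat.factorial_succ]
    push_cast
    field_simp
    ring

lemma Rtay_succ_apply (m : ℕ) (f : ℝ → ℝ) (c s : ℝ) :
    Rtay γ β ρ δ p q α (m + 1) f c s =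
      Rtay γ β ρ δ p q α m f c s - 𝒟^[m] f c * (((s ^ α - c ^ α) / (Λ * α)) ^ m / m !) := by
  rw [Rtay, Rtay, Finset.sum_range_succ]
  ring

lemma continuousOn_Rtay {f : ℝ → ℝ} (hf : ContinuousOn f (Ioi 0)) (m : ℕ) (c : ℝ) :
    ContinuousOn (fun s => Rtay γ β ρ δ p q α m f c s) (Ioi 0) :=
  hf.sub <| continuousOn_finsetSum _ fun k _ =>
    continuousOn_const.mul (continuousOn_rpow_sub_div_pow α _ _ k)

lemma VInt_Rtay_succ (hα : α ≠ 0) {u v : ℝ} (hu : 0 < u) (hv : 0 < v) {f : ℝ → ℝ}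
    (hf : ContinuousOn f (Ioi 0)) (m : ℕ) (c : ℝ) :
    ∫ω u v (fun s => Rtay γ β ρ δ p q α (m + 1) f c s) =
      ∫ω u v (fun s => Rtay γ β ρ δ p q α m f c s) -
        𝒟^[m] f c * (((v ^ α - c ^ α) / (Λ * α)) ^ (m + 1) / (m + 1)! -
          ((u ^ α - c ^ α) / (Λ * α)) ^ (m + 1) / (m + 1)!) := by
  simp only [Rtay_succ_apply]
  rw [VInt_sub hu hv (continuousOn_Rtay hf m c), VInt_const_mul, VInt_rpow_sub_div_pow hα hu hv]
  exact continuousOn_const.mul ((continuousOn_rpow_sub_div_pow α _ _ m).div_const _)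

theorem VInt_taylor_kernel_eq_add_VInt_Rtay (hα : α ≠ 0) (hL : Λ ≠ 0) {a t b : ℝ} (ha : 0 < a)
    (ht : 0 < t) (hb : 0 < b) {f : ℝ → ℝ} (m : ℕ) (hdiff : alphaDiff γ β ρ δ p q α m f)
    (hcont : ContinuousOn (𝒟^[m] f) (Ioi 0)) :
    ∫ω a b (fun s => 𝒟^[m] f s / m ! * ((t ^ α - s ^ α) / (Λ * α)) ^ m) =
      ∫ω a t (fun s => Rtay γ β ρ δ p q α m f a s) +
        ∫ω t b (fun s => Rtay γ β ρ δ p q α m f b s) := by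
  induction m with
  | zero => simpa [Rtay] using (VInt_add_adjacent ha ht hb (by simpa using hcont)).symm
  | succ m ih =>
    have hdm : DifferentiableOn ℝ (𝒟^[m] f) (Ioi 0) := hdiff m m.lt_succ_self
    have hf : ContinuousOn f (Ioi 0) := (hdiff 0 m.succ_pos).continuousOn
    rw [Function.iterate_succ_apply'] at hcont ⊢
    rw [VInt_taylor_kernel_succ hα hL ha hb t m hdm hcont,
      ih (fun j hj => hdiff j (hj.trans m.lt_succ_self)) hdm.continuousOn,
      VInt_Rtay_succ hα ha ht hf, VInt_Rtay_succ hα ht hb hf]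
    simp only [sub_self, zero_div, zero_pow m.succ_ne_zero]
    ring

end VFractional

theorem stmt4_general (γ β ρ δ p q α : ℝ) (hγ : 0 < γ) (hβ : 0 < β) (hρ : 0 < ρ) (hδ : 0 < δ)
    (hp : 0 < p) (hq : 0 < q) (hα : 0 < α)
    (a b : ℝ) (ha : 0 < a)
    (n : ℤ)
    (f : ℝ → ℝ)
    (hdiff : alphaDiff γ β ρ δ p q α (n + 1).toNat f)
    (hcont : ContinuousOn ((Dal γ β ρ δ p q α)^[(n + 1).toNat] f) (Set.Ioi 0)) :
    ∀ t ∈ Set.Icc a b,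
      VInt γ β ρ δ p q α a b (fun s =>
        ((Dal γ β ρ δ p q α)^[(n + 1).toNat] f s / (Nat.factorial (n + 1).toNat : ℝ)) *
          ((t ^ α - s ^ α) / (vlam γ β ρ δ p q * α)) ^ (n + 1).toNat) =
      VInt γ β ρ δ p q α a t (fun s => Rtay γ β ρ δ p q α (n + 1).toNat f a s) +
        VInt γ β ρ δ p q α t b (fun s => Rtay γ β ρ δ p q α (n + 1).toNat f b s) := by
  intro t ⟨hat, htb⟩
  have ht : 0 < t := ha.trans_le hat
  exact VInt_taylor_kernel_eq_add_VInt_Rtay hα.ne' (vlam_pos hγ hβ hρ hδ hp hq).ne' ha ht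
    (ht.trans_le htb) _ hdiff hcont

theorem stmt4 (γ β ρ δ p q α : ℝ) (hγ : 0 < γ) (hβ : 0 < β) (hρ : 0 < ρ) (hδ : 0 < δ)
    (hp : 0 < p) (hq : 0 < q) (hα : 0 < α) (hα1 : α ≤ 1)
    (a b : ℝ) (ha : 0 < a) (hab : a ≤ b)
    (n : ℤ) (hn : -1 ≤ n)
    (f : ℝ → ℝ)
    (hdiff : alphaDiff γ β ρ δ p q α (n + 1).toNat f)
    (hcont : ContinuousOn ((Dal γ β ρ δ p q α)^[(n + 1).toNat] f) (Set.Ioi 0)) :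
    ∀ t ∈ Set.Icc a b,
      VInt γ β ρ δ p q α a b (fun s =>
        ((Dal γ β ρ δ p q α)^[(n + 1).toNat] f s / (Nat.factorial (n + 1).toNat : ℝ)) *
          ((t ^ α - s ^ α) / (vlam γ β ρ δ p q * α)) ^ (n + 1).toNat) =
      VInt γ β ρ δ p q α a t (fun s => Rtay γ β ρ δ p q α (n + 1).toNat f a s) +
        VInt γ β ρ δ p q α t b (fun s => Rtay γ β ρ δ p q α (n + 1).toNat f b s) :=
  stmt4_general γ β ρ δ p q α hγ hβ hρ hδ hp hq hα a b ha n f hdiff hcont
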